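/- Let F be a union-closed family of nonempty subsets of a finite set N covering N, and v a capacity on (F, ⊆) with extension v̂: 2^N → ℝ given by v̂(S) = Σ { v(F) : F maximal in F(S) }. Then v is supermodular on (F, ⊆) (i.e., v(F∪G) + v(F∧G) ≥ v(F) + v(G) for all F, G ∈ F, where F∧G = ∪{H ∈ F : H ⊆ F∩G}) if and only if v̂ is supermodular on (2^N, ⊆). -/

import Mathlib

/-! Write `interior S` for the union of the members of the family contained in `S`. For a
union-closed family it is the largest such member (or `∅` if there is none), so it is the unique
maximal member of `F(S)` and `v̂ S = v (interior S)`. It is monotone, fixes members, and a member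
lies below `interior S` iff it lies below `S`; hence `F ∧ G = interior (F ∩ G)` and
`interior (interior S ∩ interior T) = interior (S ∩ T)`. On members, supermodularity of `v̂` is
that of `v`. Conversely, supermodularity of `v` at `interior S, interior T`, together with
`interior S ∪ interior T ⊆ interior (S ∪ T)` and monotonicity of `v ∘ interior`, gives that
of `v̂`. -/

open scoped Classical

/-- The extension of a valuation: v̂(S) = Σ { v(F) : F maximal in F(S) }. -/
noncomputable def vhat {N : Type*} [DecidableEq N]
    (Fam : Finset (Finset N)) (v : Finset N → ℝ) (S : Finset N) : ℝ :=
  ∑ F ∈ Fam.filter (fun F => F ⊆ S ∧ ∀ F' ∈ Fam, F' ⊆ S → F ⊆ F' → F = F'), v F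

namespace SetFamily

variable {N : Type*} [DecidableEq N] {Fam : Finset (Finset N)} {S T : Finset N}

variable (Fam) in
def interior (S : Finset N) : Finset N :=
  (Fam.filter (fun H => H ⊆ S)).sup id

theorem interior_subset (S : Finset N) : interior Fam S ⊆ S :=
  Finset.sup_le fun _ hH => (Finset.mem_filter.1 hH).2

theorem subset_interior {F : Finset N} (hF : F ∈ Fam) (hFS : F ⊆ S) : F ⊆ interior Fam S :=
  Finset.le_sup (f := id) (Finset.mem_filter.2 ⟨hF, hFS⟩)

theorem interior_mono (hST : S ⊆ T) : interior Fam S ⊆ interior Fam T :=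
  Finset.sup_le fun _ hH => subset_interior (Finset.mem_filter.1 hH).1
    ((Finset.mem_filter.1 hH).2.trans hST)

theorem interior_of_mem {F : Finset N} (hF : F ∈ Fam) : interior Fam F = F :=
  (interior_subset F).antisymm (subset_interior hF subset_rfl)

theorem subset_interior_iff {F : Finset N} (hF : F ∈ Fam) : F ⊆ interior Fam S ↔ F ⊆ S :=
  ⟨fun h => h.trans (interior_subset S), subset_interior hF⟩

theorem interior_inter_interior (S T : Finset N) :
    interior Fam (interior Fam S ∩ interior Fam T) = interior Fam (S ∩ T) := by
  refine congrArg (Finset.sup · id) (Finset.filter_congr fun H hH => ?_)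
  rw [Finset.subset_inter_iff, Finset.subset_inter_iff, subset_interior_iff hH,
    subset_interior_iff hH]

theorem interior_mem (hFam : SupClosed (Fam : Set (Finset N))) {F : Finset N} (hF : F ∈ Fam)
    (hFS : F ⊆ S) : interior Fam S ∈ Fam :=
  hFam.finsetSup_mem ⟨F, Finset.mem_filter.2 ⟨hF, hFS⟩⟩ fun _ hH => (Finset.mem_filter.1 hH).1

theorem interior_mem_or_eq_empty (hFam : SupClosed (Fam : Set (Finset N))) (S : Finset N) :
    interior Fam S ∈ Fam ∨ interior Fam S = ∅ := by
  rcases (Fam.filter (fun H => H ⊆ S)).eq_empty_or_nonempty with h | ⟨F, hF⟩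
  · exact Or.inr (by rw [interior, h, Finset.sup_empty]; rfl)
  · exact Or.inl (interior_mem hFam (Finset.mem_filter.1 hF).1 (Finset.mem_filter.1 hF).2)

theorem filter_maximal_eq (hFam : SupClosed (Fam : Set (Finset N))) (S : Finset N) :
    Fam.filter (fun F => F ⊆ S ∧ ∀ F' ∈ Fam, F' ⊆ S → F ⊆ F' → F = F') =
      Fam.filter (fun F => F = interior Fam S) := by
  refine Finset.filter_congr fun F hF => ⟨fun ⟨hFS, hmax⟩ => ?_, ?_⟩
  · exact hmax _ (interior_mem hFam hF hFS) (interior_subset S) (subset_interior hF hFS)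
  · rintro rfl
    exact ⟨interior_subset S, fun F' hF' hF'S h => h.antisymm (subset_interior hF' hF'S)⟩

theorem vhat_eq_apply_interior (hFam : SupClosed (Fam : Set (Finset N))) {v : Finset N → ℝ}
    (hv : v ∅ = 0) (S : Finset N) : vhat Fam v S = v (interior Fam S) := by
  rw [vhat, filter_maximal_eq hFam, Finset.filter_eq' Fam]
  rcases interior_mem_or_eq_empty hFam S with h | h
  · rw [if_pos h, Finset.sum_singleton]
  · rw [h, hv]
    split_ifs <;> simp [hv]

theorem monotone_apply_interior (hFam : SupClosed (Fam : Set (Finset N))) {v : Finset N → ℝ}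
    (hv0 : ∀ F ∈ Fam, 0 ≤ v F) (hmono : ∀ F ∈ Fam, ∀ G ∈ Fam, F ⊆ G → v F ≤ v G)
    (hv : v ∅ = 0) : Monotone fun S => v (interior Fam S) := by
  intro S T hST
  show v (interior Fam S) ≤ v (interior Fam T)
  have hsub : interior Fam S ⊆ interior Fam T := interior_mono hST
  rcases interior_mem_or_eq_empty hFam T with hT | hT
  · rcases interior_mem_or_eq_empty hFam S with hS | hS
    · exact hmono _ hS _ hT hsub
    · simpa only [hS, hv] using hv0 _ hT
  · rw [hT, Finset.subset_empty] at hsub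
    rw [hsub, hT]

theorem supermodular_apply_interior (hFam : SupClosed (Fam : Set (Finset N)))
    {v : Finset N → ℝ} (hv0 : ∀ F ∈ Fam, 0 ≤ v F)
    (hmono : ∀ F ∈ Fam, ∀ G ∈ Fam, F ⊆ G → v F ≤ v G) (hv : v ∅ = 0)
    (hsuper : ∀ F ∈ Fam, ∀ G ∈ Fam, v F + v G ≤ v (F ∪ G) + v (interior Fam (F ∩ G)))
    (S T : Finset N) :
    v (interior Fam S) + v (interior Fam T) ≤
      v (interior Fam (S ∪ T)) + v (interior Fam (S ∩ T)) := by
  have hvi := monotone_apply_interior hFam hv0 hmono hv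
  rcases interior_mem_or_eq_empty hFam S with hS | hS
  swap
  · have hST : interior Fam (S ∩ T) = ∅ :=
      Finset.subset_empty.1 (hS ▸ interior_mono Finset.inter_subset_left)
    rw [hS, hST, hv]
    linarith [hvi (Finset.subset_union_right : T ⊆ S ∪ T)]
  rcases interior_mem_or_eq_empty hFam T with hT | hT
  swap
  · have hST : interior Fam (S ∩ T) = ∅ :=
      Finset.subset_empty.1 (hT ▸ interior_mono Finset.inter_subset_right)
    rw [hT, hST, hv]
    linarith [hvi (Finset.subset_union_left : S ⊆ S ∪ T)]
  have hunion : v (interior Fam S ∪ interior Fam T) ≤ v (interior Fam (S ∪ T)) := by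
    rw [← interior_of_mem (F := interior Fam S ∪ interior Fam T) (hFam hS hT)]
    exact hvi (Finset.union_subset_union (interior_subset S) (interior_subset T))
  calc v (interior Fam S) + v (interior Fam T)
      ≤ v (interior Fam S ∪ interior Fam T) + v (interior Fam (interior Fam S ∩ interior Fam T)) :=
        hsuper _ hS _ hT
    _ ≤ v (interior Fam (S ∪ T)) + v (interior Fam (S ∩ T)) := by
        rw [interior_inter_interior]
        linarith

end SetFamily

open SetFamily in
theorem stmt_17 {N : Type*} [DecidableEq N]
    (Fam : Finset (Finset N))
    (huc : ∀ F ∈ Fam, ∀ G ∈ Fam, F ∪ G ∈ Fam)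
    (v : Finset N → ℝ) (hv0 : ∀ F ∈ Fam, 0 ≤ v F)
    (hmono : ∀ F ∈ Fam, ∀ G ∈ Fam, F ⊆ G → v F ≤ v G)
    (hvempty : v ∅ = 0) :
    (∀ F ∈ Fam, ∀ G ∈ Fam,
        v F + v G ≤ v (F ∪ G) + v ((Fam.filter (fun H => H ⊆ F ∩ G)).sup id)) ↔
    (∀ S T : Finset N,
        vhat Fam v S + vhat Fam v T ≤ vhat Fam v (S ∪ T) + vhat Fam v (S ∩ T)) := by
  have hFam : SupClosed (Fam : Set (Finset N)) := fun F hF G hG => huc F hF G hG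
  simp only [vhat_eq_apply_interior hFam hvempty]
  refine ⟨supermodular_apply_interior hFam hv0 hmono hvempty, fun h F hF G hG => ?_⟩
  show v F + v G ≤ v (F ∪ G) + v (interior Fam (F ∩ G))
  simpa only [interior_of_mem hF, interior_of_mem hG, interior_of_mem (huc F hF G hG)] using h F G
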